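/- arXiv:1709.08714 — 3 statements merged into one kernel-verified Lean document; each statement's English description precedes it below -/
import Mathlib

section
/- Let (L, [·,·], α) be a regular Hom-Lie algebra over a commutative ring k with Char(k) ≠ 2. Then (L, [·,·]_α), where [a,b]_α := α⁻¹([a,b]), is a Lie algebra; that is, the bracket [·,·]_α is bilinear, satisfies [a,a]_α = 0, and satisfies the Jacobi identity [a,[b,c]_α]_α + [b,[c,a]_α]_α + [c,[a,b]_α]_α = 0 for all a,b,c ∈ L. -/
/-- Let `(L, [·,·], α)` be a regular Hom-Lie algebra over a commutative ring
`k` with Char(k) ≠ 2.  Then `(L, [·,·]_α)` with `[a,b]_α := α⁻¹ [a,b]` is a Lie algebra: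
the bracket (bilinear by construction) is alternating and satisfies the Jacobi identity. -/
theorem stmt1 {k L : Type*} [CommRing k] [Invertible (2 : k)]
    [AddCommGroup L] [Module k L]
    (br : L →ₗ[k] L →ₗ[k] L) (α : L ≃ₗ[k] L)
    (halt : ∀ a : L, br a a = 0)
    (hjac : ∀ a b c : L,
      br (α a) (br b c) + br (α b) (br c a) + br (α c) (br a b) = 0)
    (hmul : ∀ a b : L, α (br a b) = br (α a) (α b)) :
    (∀ a : L, α.symm (br a a) = 0) ∧
    (∀ a b c : L,
      α.symm (br a (α.symm (br b c))) + α.symm (br b (α.symm (br c a)))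
        + α.symm (br c (α.symm (br a b))) = 0) := by
  have hsymm : ∀ a b : L, α.symm (br a b) = br (α.symm a) (α.symm b) := by
    intro a b
    apply α.injective
    rw [α.apply_symm_apply, hmul, α.apply_symm_apply, α.apply_symm_apply]
  constructor
  · intro a
    rw [halt, map_zero]
  · intro a b c
    rw [hsymm b c, hsymm c a, hsymm a b, hsymm, hsymm, hsymm]
    have h := hjac (α.symm a) (α.symm b) (α.symm c)
    rw [α.apply_symm_apply, α.apply_symm_apply, α.apply_symm_apply] at h
    have : α.symm (br a (br (α.symm b) (α.symm c)) + br b (br (α.symm c) (α.symm a))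
        + br c (br (α.symm a) (α.symm b))) = 0 := by rw [h, map_zero]
    simpa [map_add, hsymm] using this
end

section
/- Let k be a commutative ring with identity and Char(k) ≠ 2, let (L, [·,·]) be a Lie algebra over k, and let α : L → L be a Lie algebra homomorphism. Define the trilinear map [a,b,c] := [[a,b],c] and set [a,b,c]_α := α([a,b,c]). Then (L, [·,·,·]_α, α) is a multiplicative Hom-Lie triple system: it satisfies [a,a,b]_α = 0, the cyclic identity [a,b,c]_α + [b,c,a]_α + [c,a,b]_α = 0, the ternary Hom-Nambu identity [α(a),α(b),[c,d,e]_α]_α = [[a,b,c]_α,α(d),α(e)]_α + [α(c),[a,b,d]_α,α(e)]_α + [α(c),α(d),[a,b,e]_α]_α, and α([a,b,c]_α) = [α(a),α(b),α(c)]_α. Moreover, if α is a Lie algebra automorphism then this Hom-Lie triple system is regular (α is bijective). -/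
lemma key_nambu {L : Type*} [LieRing L] (a b c d e : L) :
    ⁅⁅a, b⁆, ⁅⁅c, d⁆, e⁆⁆ =
      ⁅⁅⁅⁅a, b⁆, c⁆, d⁆, e⁆ + ⁅⁅c, ⁅⁅a, b⁆, d⁆⁆, e⁆ + ⁅⁅c, d⁆, ⁅⁅a, b⁆, e⁆⁆ := by
  have h1 : ⁅⁅a, b⁆, ⁅⁅c, d⁆, e⁆⁆ = ⁅⁅⁅a, b⁆, ⁅c, d⁆⁆, e⁆ + ⁅⁅c, d⁆, ⁅⁅a, b⁆, e⁆⁆ := by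
    rw [leibniz_lie]
  have h2 : ⁅⁅a, b⁆, ⁅c, d⁆⁆ = ⁅⁅⁅a, b⁆, c⁆, d⁆ + ⁅c, ⁅⁅a, b⁆, d⁆⁆ := by
    rw [leibniz_lie]
  rw [h1, h2, add_lie]

/-- Let `L` be a Lie algebra over a commutative ring `k` with Char(k) ≠ 2
and `α : L → L` a Lie algebra homomorphism.  With `[a,b,c]_α := α ⁅⁅a,b⁆,c⁆`, the triple
`(L, [·,·,·]_α, α)` is a multiplicative Hom-Lie triple system, and it is regular whenever
`α` is a Lie algebra automorphism. -/
theorem stmt2 {k L : Type*} [CommRing k] [Invertible (2 : k)]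
    [LieRing L] [LieAlgebra k L] (α : L →ₗ[k] L)
    (hα : ∀ a b : L, α ⁅a, b⁆ = ⁅α a, α b⁆) :
    (∀ a b : L, α ⁅⁅a, a⁆, b⁆ = 0) ∧
    (∀ a b c : L, α ⁅⁅a, b⁆, c⁆ + α ⁅⁅b, c⁆, a⁆ + α ⁅⁅c, a⁆, b⁆ = 0) ∧
    (∀ a b c d e : L,
      α ⁅⁅α a, α b⁆, α ⁅⁅c, d⁆, e⁆⁆ =
        α ⁅⁅α ⁅⁅a, b⁆, c⁆, α d⁆, α e⁆ + α ⁅⁅α c, α ⁅⁅a, b⁆, d⁆⁆, α e⁆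
          + α ⁅⁅α c, α d⁆, α ⁅⁅a, b⁆, e⁆⁆) ∧
    (∀ a b c : L, α (α ⁅⁅a, b⁆, c⁆) = α ⁅⁅α a, α b⁆, α c⁆) ∧
    (Function.Bijective α → Function.Bijective α) := by
  refine ⟨fun a b => by simp, fun a b c => ?_, fun a b c d e => ?_,
    fun a b c => by simp only [hα], fun h => h⟩
  · rw [← map_add, ← map_add]
    have e1 : ⁅⁅a, b⁆, c⁆ = -⁅c, ⁅a, b⁆⁆ := (lie_skew _ _).symm
    have e2 : ⁅⁅b, c⁆, a⁆ = -⁅a, ⁅b, c⁆⁆ := (lie_skew _ _).symm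
    have e3 : ⁅⁅c, a⁆, b⁆ = -⁅b, ⁅c, a⁆⁆ := (lie_skew _ _).symm
    rw [e1, e2, e3, ← neg_add, ← neg_add, lie_jacobi c a b]
    simp
  · simp only [← hα, ← map_add, ← key_nambu]
end

section
/- Let (T, [·,·,·], α) be a regular Hom-Lie triple system over a commutative ring k with Char(k) ≠ 2. Then HDR(T) is closed under the isotope commutator: if X, Y ∈ HDR(T), then [X,Y] := X ∘ α⁻¹ ∘ Y − Y ∘ α⁻¹ ∘ X also belongs to HDR(T). Consequently HDR(T), equipped with this bracket, is a Lie algebra (a Lie subalgebra of the isotope Lie algebra End(T)^{α⁻¹}). -/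
/-- The isotope commutator `[X,Y] = X ∘ α⁻¹ ∘ Y − Y ∘ α⁻¹ ∘ X` on `End(T)`. -/
def isoBr {k T : Type*} [CommRing k] [AddCommGroup T] [Module k T]
    (α : T ≃ₗ[k] T) (X Y : Module.End k T) : Module.End k T :=
  X ∘ₗ (α.symm : T →ₗ[k] T) ∘ₗ Y - Y ∘ₗ (α.symm : T →ₗ[k] T) ∘ₗ X

/-- `HDR(T)`: the set of `X ∈ End(T)` with
`(X ∘ α⁻¹)[c,d,e] = [X^{α⁻¹}c,d,e] + [c,X^{α⁻¹}d,e] + [c,d,X^{α⁻¹}e]`. -/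
def HDR {k T : Type*} [CommRing k] [AddCommGroup T] [Module k T]
    (t : T →ₗ[k] T →ₗ[k] T →ₗ[k] T) (α : T ≃ₗ[k] T) : Set (Module.End k T) :=
  {X | ∀ c d e : T, X (α.symm (t c d e)) =
    t (α.symm (X c)) d e + t c (α.symm (X d)) e + t c d (α.symm (X e))}

/-- For a regular Hom-Lie triple system `(T, [·,·,·], α)` over a commutative
ring `k` with Char(k) ≠ 2, `HDR(T)` is closed under the isotope commutator, which is an
alternating bracket satisfying the Jacobi identity; hence `HDR(T)` is a Lie algebra (a Lie
subalgebra of the isotope Lie algebra `End(T)^{α⁻¹}`). -/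
theorem stmt5 {k T : Type*} [CommRing k] [Invertible (2 : k)]
    [AddCommGroup T] [Module k T]
    (t : T →ₗ[k] T →ₗ[k] T →ₗ[k] T) (α : T ≃ₗ[k] T)
    (h1 : ∀ a b : T, t a a b = 0)
    (h2 : ∀ a b c : T, t a b c + t b c a + t c a b = 0)
    (h3 : ∀ a b c d e : T, t (α a) (α b) (t c d e) =
      t (t a b c) (α d) (α e) + t (α c) (t a b d) (α e) + t (α c) (α d) (t a b e))
    (h4 : ∀ a b c : T, α (t a b c) = t (α a) (α b) (α c)) :
    (∀ X Y : Module.End k T, X ∈ HDR t α → Y ∈ HDR t α → isoBr α X Y ∈ HDR t α) ∧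
    (∀ X : Module.End k T, isoBr α X X = 0) ∧
    (∀ X Y Z : Module.End k T,
      isoBr α X (isoBr α Y Z) + isoBr α Y (isoBr α Z X)
        + isoBr α Z (isoBr α X Y) = 0) := by
  refine ⟨?_, ?_, ?_⟩
  · intro X Y hX hY c d e
    simp only [HDR, Set.mem_setOf_eq] at hX hY
    simp only [isoBr, LinearMap.sub_apply, LinearMap.coe_comp, Function.comp_apply,
      LinearEquiv.coe_coe]
    rw [hY c d e, hX c d e]
    simp only [map_add, map_sub, LinearMap.add_apply, LinearMap.sub_apply, hX, hY]
    abel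
  · intro X
    simp [isoBr]
  · intro X Y Z
    ext v
    simp only [isoBr, LinearMap.sub_apply, LinearMap.add_apply, LinearMap.coe_comp,
      Function.comp_apply, LinearEquiv.coe_coe, map_sub, LinearMap.zero_apply]
    abel
end
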